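/- Let N ≥ 4 and m ∈ ℕ. On (0,1) define α(x) = x/(1-x), β(x) = -(1/(1-x))·( (x/(1-x))·(N/2) + 5/2 ), the first-order operator (Ď y)(x) = -(1-x) y'(x), and the second-order operator (Δ y)(x) = (1-x) y''(x) - (N/2) y'(x). Then there exist functions γ_{0k}, γ_{1k} ∈ C^∞((0,1)) for k = 0, …, m, with γ_{1m} ≡ 0, such that for every y ∈ C^∞((0,1)) and every x ∈ (0,1): ((αΔ + βĎ)^m y)(x) = Σ_{k=0}^{m} ( γ_{1k}(x)·(Ď Δ^k y)(x) + γ_{0k}(x)·(Δ^k y)(x) ). -/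

import Mathlib

open Real Set Filter Topology

/-- `Ď y = -(1-x) y'` (that is, `z dy/dz` in the variable `z = 1-x`). -/
noncomputable def Dcheck1 (y : ℝ → ℝ) : ℝ → ℝ := fun x => -(1-x) * deriv y x

/-- `Δ y = (1-x) y'' - (N/2) y'` (that is, `z d²y/dz² + (N/2) dy/dz` with `z = 1-x`). -/
noncomputable def Delta1 (N : ℝ) (y : ℝ → ℝ) : ℝ → ℝ := fun x =>
  (1-x) * deriv (deriv y) x - (N/2) * deriv y x

/-- `α(x) = x/(1-x)`. -/
noncomputable def alphaCoef : ℝ → ℝ := fun x => x / (1-x)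

/-- `β(x) = -(1/(1-x))·((x/(1-x))·(N/2) + 5/2)`. -/
noncomputable def betaCoef (N : ℝ) : ℝ → ℝ := fun x =>
  -(1/(1-x)) * ((x/(1-x)) * (N/2) + 5/2)

/-- The operator `αΔ + βĎ`. -/
noncomputable def Tober (N : ℝ) (y : ℝ → ℝ) : ℝ → ℝ := fun x =>
  alphaCoef x * Delta1 N y x + betaCoef N x * Dcheck1 y x

/-!
On `(0,1)` the operator `αΔ + βĎ` is `x d²/dx² + (5/2) d/dx`, so its `m`-th power is a
differential operator of order `2m` with smooth coefficients. Write `E_{2k} = Δ^k` and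
`E_{2k+1} = Ď Δ^k`, of order `2k` and `2k+1`. Because `d/dx = -(1-x)⁻¹ Ď` and
`d/dx ∘ Ď = (N/2 - 1)(1-x)⁻¹ Ď - Δ`, the derivative of a smooth combination of
`E_0, …, E_n` is a smooth combination of `E_0, …, E_{n+1}`. Hence `(αΔ + βĎ)^m` is a smooth
combination of `E_0, …, E_{2m}`, which does not involve `E_{2m+1} = Ď Δ^m`.
-/

open scoped ContDiff

theorem Finset.sum_range_two_mul {M : Type*} [AddCommMonoid M] (f : ℕ → M) (n : ℕ) :
    ∑ i ∈ Finset.range (2 * n), f i =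
      ∑ k ∈ Finset.range n, (f (2 * k) + f (2 * k + 1)) := by
  induction n with
  | zero => simp
  | succ n ih =>
    rw [Nat.mul_succ, Finset.sum_range_succ, Finset.sum_range_succ, Finset.sum_range_succ, ih,
      add_assoc]

section

variable {y : ℝ → ℝ} {x : ℝ} {s : Set ℝ}

theorem contDiffOn_inv_one_sub (hs : (1 : ℝ) ∉ s) :
    ContDiffOn ℝ ∞ (fun x : ℝ => (1 - x)⁻¹) s :=
  (contDiffOn_const.sub contDiffOn_id).inv fun _ hx =>
    sub_ne_zero.2 (ne_of_mem_of_not_mem hx hs).symm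

theorem ContDiffOn.dcheck1 (hy : ContDiffOn ℝ ∞ y s) (hs : IsOpen s) :
    ContDiffOn ℝ ∞ (Dcheck1 y) s :=
  (contDiffOn_const.sub contDiffOn_id).neg.mul (hy.deriv_of_isOpen hs le_rfl)

theorem ContDiffOn.delta1_iterate (N : ℝ) (hy : ContDiffOn ℝ ∞ y s) (hs : IsOpen s)
    (k : ℕ) : ContDiffOn ℝ ∞ ((Delta1 N)^[k] y) s := by
  induction k with
  | zero => exact hy
  | succ k ih =>
    have hy' := ih.deriv_of_isOpen (m := ∞) hs le_rfl
    rw [Function.iterate_succ_apply']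
    exact ((contDiffOn_const.sub contDiffOn_id).mul (hy'.deriv_of_isOpen hs le_rfl)).sub
      (contDiffOn_const.mul hy')

theorem deriv_eq_dcheck1 (hx : x ≠ 1) : deriv y x = -(1 - x)⁻¹ * Dcheck1 y x := by
  have h1x : 1 - x ≠ 0 := sub_ne_zero.2 hx.symm
  simp only [Dcheck1]
  field_simp

theorem deriv_dcheck1 (N : ℝ) (hy : DifferentiableAt ℝ (deriv y) x) (hx : x ≠ 1) :
    deriv (Dcheck1 y) x = (N / 2 - 1) * (1 - x)⁻¹ * Dcheck1 y x - Delta1 N y x := by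
  have h1x : 1 - x ≠ 0 := sub_ne_zero.2 hx.symm
  have hD : HasDerivAt (Dcheck1 y) (deriv y x - (1 - x) * deriv (deriv y) x) x := by
    have hD' : Dcheck1 y = fun t => (t - 1) * deriv y t := funext fun t => by
      simp only [Dcheck1]; ring
    rw [hD']
    exact (((hasDerivAt_id' x).sub_const 1).mul hy.hasDerivAt).congr_deriv (by ring)
  rw [hD.deriv]
  simp only [Dcheck1, Delta1]
  field_simp
  ring

theorem tober_eq_of_ne_one (N : ℝ) (y : ℝ → ℝ) (hx : x ≠ 1) :
    Tober N y x = x * deriv (deriv y) x + 5 / 2 * deriv y x := by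
  have h1x : 1 - x ≠ 0 := sub_ne_zero.2 hx.symm
  simp only [Tober, alphaCoef, betaCoef, Delta1, Dcheck1]
  field_simp
  ring

end

/-- `Δ^k` for `j = 2k` and `Ď Δ^k` for `j = 2k + 1`: an operator of order `j`. -/
noncomputable def basisOp (N : ℝ) (j : ℕ) (y : ℝ → ℝ) : ℝ → ℝ :=
  Dcheck1^[j % 2] ((Delta1 N)^[j / 2] y)

def HasNormalForm (N : ℝ) (n : ℕ) (L : (ℝ → ℝ) → ℝ → ℝ) : Prop :=
  ∃ γ : ℕ → ℝ → ℝ, (∀ j, ContDiffOn ℝ ∞ (γ j) (Ioo 0 1)) ∧ (∀ j, n < j → γ j = 0) ∧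
    ∀ y, ContDiffOn ℝ ∞ y (Ioo 0 1) → ∀ x ∈ Ioo (0 : ℝ) 1,
      L y x = ∑ j ∈ Finset.range (n + 1), γ j x * basisOp N j y x

section

variable {N : ℝ} {y : ℝ → ℝ}

theorem basisOp_two_mul (k : ℕ) : basisOp N (2 * k) y = (Delta1 N)^[k] y := by
  rw [basisOp, show 2 * k % 2 = 0 by omega, show 2 * k / 2 = k by omega]
  rfl

theorem basisOp_two_mul_add_one (k : ℕ) :
    basisOp N (2 * k + 1) y = Dcheck1 ((Delta1 N)^[k] y) := by
  rw [basisOp, show (2 * k + 1) % 2 = 1 by omega, show (2 * k + 1) / 2 = k by omega]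
  rfl

theorem ContDiffOn.basisOp {s : Set ℝ} (hy : ContDiffOn ℝ ∞ y s) (hs : IsOpen s) (j : ℕ) :
    ContDiffOn ℝ ∞ (basisOp N j y) s := by
  obtain ⟨k, rfl | rfl⟩ := Nat.even_or_odd' j
  · rw [basisOp_two_mul]
    exact hy.delta1_iterate N hs k
  · rw [basisOp_two_mul_add_one]
    exact (hy.delta1_iterate N hs k).dcheck1 hs

namespace HasNormalForm

variable {n : ℕ} {L L' : (ℝ → ℝ) → ℝ → ℝ}

theorem congr (hL : HasNormalForm N n L)
    (h : ∀ y, ContDiffOn ℝ ∞ y (Ioo 0 1) → ∀ x ∈ Ioo (0 : ℝ) 1, L' y x = L y x) :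
    HasNormalForm N n L' := by
  obtain ⟨γ, hγ, hvan, hL⟩ := hL
  exact ⟨γ, hγ, hvan, fun y hy x hx => (h y hy x hx).trans (hL y hy x hx)⟩

theorem zero : HasNormalForm N n fun _ _ => 0 :=
  ⟨0, fun _ => contDiffOn_const, fun _ _ => rfl, fun _ _ _ _ => by simp⟩

theorem add (hL : HasNormalForm N n L) (hL' : HasNormalForm N n L') :
    HasNormalForm N n fun y x => L y x + L' y x := by
  obtain ⟨γ, hγ, hvan, hL⟩ := hL
  obtain ⟨γ', hγ', hvan', hL'⟩ := hL'
  refine ⟨γ + γ', fun j => (hγ j).add (hγ' j), fun j hj => by simp [hvan j hj, hvan' j hj],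
    fun y hy x hx => ?_⟩
  simp only [hL y hy x hx, hL' y hy x hx, Pi.add_apply, add_mul, Finset.sum_add_distrib]

theorem smul {g : ℝ → ℝ} (hL : HasNormalForm N n L) (hg : ContDiffOn ℝ ∞ g (Ioo 0 1)) :
    HasNormalForm N n fun y x => g x * L y x := by
  obtain ⟨γ, hγ, hvan, hL⟩ := hL
  refine ⟨fun j x => g x * γ j x, fun j => hg.mul (hγ j),
    fun j hj => funext fun x => by simp [hvan j hj], fun y hy x hx => ?_⟩
  simp only [hL y hy x hx, Finset.mul_sum, mul_assoc]

theorem sum {ι : Type*} (s : Finset ι) {L : ι → (ℝ → ℝ) → ℝ → ℝ}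
    (hL : ∀ i ∈ s, HasNormalForm N n (L i)) :
    HasNormalForm N n fun y x => ∑ i ∈ s, L i y x := by
  classical
  induction s using Finset.induction_on with
  | empty => simpa using zero
  | insert i s hi ih =>
    simp_rw [Finset.sum_insert hi]
    exact (hL i (s.mem_insert_self i)).add (ih fun j hj => hL j (s.mem_insert_of_mem hj))

theorem mono {n' : ℕ} (hL : HasNormalForm N n L) (hn : n ≤ n') : HasNormalForm N n' L := by
  obtain ⟨γ, hγ, hvan, hL⟩ := hL
  refine ⟨γ, hγ, fun j hj => hvan j (by omega), fun y hy x hx => ?_⟩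
  rw [hL y hy x hx]
  refine Finset.sum_subset (Finset.range_subset_range.2 (by omega)) fun j _ hj => ?_
  simp [hvan j (by simpa using hj)]

end HasNormalForm

theorem hasNormalForm_basisOp {n j : ℕ} (hj : j ≤ n) : HasNormalForm N n (basisOp N j) := by
  refine ⟨fun i _ => if i = j then 1 else 0, fun _ => contDiffOn_const,
    fun i hi => funext fun _ => if_neg (by omega), fun y _ x _ => ?_⟩
  simp [Nat.lt_succ_of_le hj]

theorem hasNormalForm_deriv_basisOp (j : ℕ) :
    HasNormalForm N (j + 1) fun y x => deriv (basisOp N j y) x := by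
  obtain ⟨k, rfl | rfl⟩ := Nat.even_or_odd' j
  · refine ((hasNormalForm_basisOp le_rfl).smul (contDiffOn_inv_one_sub (by simp)).neg).congr
      fun y _ x hx => ?_
    rw [basisOp_two_mul, basisOp_two_mul_add_one, deriv_eq_dcheck1 hx.2.ne]
  · have hĎ : HasNormalForm N (2 * k + 2) fun y x =>
        (N / 2 - 1) * (1 - x)⁻¹ * basisOp N (2 * k + 1) y x :=
      (hasNormalForm_basisOp (by omega)).smul
        (contDiffOn_const.mul (contDiffOn_inv_one_sub (by simp)))
    have hΔ : HasNormalForm N (2 * k + 2) fun y x => -1 * basisOp N (2 * (k + 1)) y x :=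
      (hasNormalForm_basisOp le_rfl).smul contDiffOn_const
    refine (hĎ.add hΔ).congr fun y hy x hx => ?_
    have hΔk := (hy.delta1_iterate N isOpen_Ioo k).deriv_of_isOpen (m := ∞) isOpen_Ioo le_rfl
    rw [basisOp_two_mul_add_one, basisOp_two_mul, Function.iterate_succ_apply',
      deriv_dcheck1 N ((hΔk.contDiffAt (isOpen_Ioo.mem_nhds hx)).differentiableAt (by simp))
        hx.2.ne]
    ring

namespace HasNormalForm

variable {n : ℕ} {L : (ℝ → ℝ) → ℝ → ℝ}

theorem deriv (hL : HasNormalForm N n L) :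
    HasNormalForm N (n + 1) fun y x => deriv (L y) x := by
  obtain ⟨γ, hγ, -, hL⟩ := hL
  have hterm : ∀ j ∈ Finset.range (n + 1), HasNormalForm N (n + 1) fun y x =>
      _root_.deriv (γ j) x * basisOp N j y x + γ j x * _root_.deriv (basisOp N j y) x := by
    intro j hj
    have hjn : j ≤ n := Nat.lt_succ_iff.1 (Finset.mem_range.1 hj)
    have hγ' := (hγ j).deriv_of_isOpen (m := ∞) isOpen_Ioo le_rfl
    exact ((hasNormalForm_basisOp (by omega)).smul hγ').add
      (((hasNormalForm_deriv_basisOp j).smul (hγ j)).mono (by omega))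
  refine (sum _ hterm).congr fun y hy x hx => ?_
  have hγx j := ((hγ j).contDiffAt (isOpen_Ioo.mem_nhds hx)).differentiableAt (by simp)
  have hEx j := (((hy.basisOp (N := N) isOpen_Ioo j).contDiffAt
    (isOpen_Ioo.mem_nhds hx)).differentiableAt (by simp))
  rw [(eventuallyEq_of_mem (isOpen_Ioo.mem_nhds hx) (hL y hy)).deriv_eq,
    deriv_fun_sum fun j _ => (hγx j).fun_mul (hEx j)]
  exact Finset.sum_congr rfl fun j _ => deriv_fun_mul (hγx j) (hEx j)

theorem tober (hL : HasNormalForm N n L) : HasNormalForm N (n + 2) fun y => Tober N (L y) := by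
  have h1 := hL.deriv
  exact ((h1.deriv.smul contDiffOn_id).add ((h1.smul contDiffOn_const).mono (by omega))).congr
    fun y _ x hx => tober_eq_of_ne_one N (L y) hx.2.ne

end HasNormalForm

end

theorem hasNormalForm_tober_iterate (N : ℝ) (m : ℕ) :
    HasNormalForm N (2 * m) (Tober N)^[m] := by
  induction m with
  | zero => exact hasNormalForm_basisOp le_rfl
  | succ m ih =>
    rw [Function.iterate_succ', Nat.mul_succ]
    exact ih.tober

theorem iterate_normal_form_general (N : ℝ) (m : ℕ) :
    ∃ γ0 γ1 : ℕ → ℝ → ℝ,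
      (∀ k ≤ m, ContDiffOn ℝ (⊤:ℕ∞) (γ0 k) (Ioo 0 1)
        ∧ ContDiffOn ℝ (⊤:ℕ∞) (γ1 k) (Ioo 0 1)) ∧
      (∀ x ∈ Ioo (0:ℝ) 1, γ1 m x = 0) ∧
      (∀ y : ℝ → ℝ, ContDiffOn ℝ (⊤:ℕ∞) y (Ioo 0 1) → ∀ x ∈ Ioo (0:ℝ) 1,
        (Tober N)^[m] y x = ∑ k ∈ Finset.range (m+1),
          (γ1 k x * Dcheck1 ((Delta1 N)^[k] y) x + γ0 k x * (Delta1 N)^[k] y x)) := by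
  obtain ⟨γ, hγ, hvan, hT⟩ := hasNormalForm_tober_iterate N m
  have hγtop : γ (2 * m + 1) = 0 := hvan _ (by omega)
  refine ⟨fun k => γ (2 * k), fun k => γ (2 * k + 1), fun k _ => ⟨hγ _, hγ _⟩,
    fun x _ => by simp [hγtop], fun y hy x hx => ?_⟩
  calc (Tober N)^[m] y x
      = ∑ j ∈ Finset.range (2 * (m + 1)), γ j x * basisOp N j y x := by
        rw [hT y hy x hx, Nat.mul_succ, Finset.sum_range_succ _ (2 * m + 1), hγtop]
        simp
    _ = _ := by
        rw [Finset.sum_range_two_mul]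
        simp only [basisOp_two_mul, basisOp_two_mul_add_one]
        exact Finset.sum_congr rfl fun _ _ => add_comm _ _

/-- **Appendix 2** (normal form of powers of `αΔ + βĎ`): there are smooth coefficients
`γ_{0k}, γ_{1k}` on `(0,1)`, with `γ_{1m} ≡ 0`, such that
`(αΔ + βĎ)^m y = Σ_{k≤m} (γ_{1k} Ď Δ^k y + γ_{0k} Δ^k y)` for all smooth `y`. -/
theorem iterate_normal_form (N : ℝ) (hN : 4 ≤ N) (m : ℕ) :
    ∃ γ0 γ1 : ℕ → ℝ → ℝ,
      (∀ k ≤ m, ContDiffOn ℝ (⊤:ℕ∞) (γ0 k) (Ioo 0 1)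
        ∧ ContDiffOn ℝ (⊤:ℕ∞) (γ1 k) (Ioo 0 1)) ∧
      (∀ x ∈ Ioo (0:ℝ) 1, γ1 m x = 0) ∧
      (∀ y : ℝ → ℝ, ContDiffOn ℝ (⊤:ℕ∞) y (Ioo 0 1) → ∀ x ∈ Ioo (0:ℝ) 1,
        (Tober N)^[m] y x = ∑ k ∈ Finset.range (m+1),
          (γ1 k x * Dcheck1 ((Delta1 N)^[k] y) x + γ0 k x * (Delta1 N)^[k] y x)) :=
  iterate_normal_form_general N m
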